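/- Let G be a finite simple graph with at least two vertices. Then λ(G) ≤ -ι(G), where ι(G) is the maximum of the average degree d̄(H) = 2|E(H)|/|V(H)| over all nonempty induced bipartite subgraphs H of G. -/

import Mathlib

/-!
Common definitions: smallest adjacency eigenvalue, independent vertex sets,
edge counts of induced subgraphs, chromatic number, independence number,
and the invariants `η`, `ι`, `θ` from the paper.
-/

open Finset SimpleGraph Matrix

set_option linter.unusedSectionVars false

variable {V : Type} [Fintype V] [DecidableEq V]

/-- A finite set of vertices is an independent set in `G`. -/
def IsIndepFinset (G : SimpleGraph V) (s : Finset V) : Prop :=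
  ∀ u ∈ s, ∀ v ∈ s, ¬ G.Adj u v

/-- The adjacency matrix of a finite graph is Hermitian (over `ℝ`). -/
theorem adj_isHermitian (G : SimpleGraph V) [DecidableRel G.Adj] :
    (G.adjMatrix ℝ).IsHermitian := by
  rw [Matrix.IsHermitian, conjTranspose_eq_transpose_of_trivial]
  exact isSymm_adjMatrix G

/-- `λ(G)`: the smallest eigenvalue of the adjacency matrix of `G`. -/
noncomputable def lambdaMin (G : SimpleGraph V) : ℝ :=
  letI := Classical.decRel G.Adj
  ⨅ i, (adj_isHermitian G).eigenvalues i

/-- `|E(G)|`: the number of edges of `G`. -/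
noncomputable def edgeCount (G : SimpleGraph V) : ℕ := Nat.card G.edgeSet

/-- The number of edges of the subgraph of `G` induced on the vertex set `s`. -/
noncomputable def inducedEdgeCount (G : SimpleGraph V) (s : Finset V) : ℕ :=
  Nat.card (G.induce (s : Set V)).edgeSet

/-- `χ(G)`: the chromatic number of `G`, as a natural number. -/
noncomputable def chromNum (G : SimpleGraph V) : ℕ := G.chromaticNumber.toNat

/-- `α(G)`: the independence number of `G`. -/
noncomputable def indepNum (G : SimpleGraph V) : ℕ :=
  sSup {k | ∃ s : Finset V, IsIndepFinset G s ∧ s.card = k}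

/-- `θ(G) = min {n/2, α(G)}`. -/
noncomputable def theta (G : SimpleGraph V) : ℝ :=
  min ((Fintype.card V : ℝ) / 2) (_root_.indepNum G : ℝ)

/-- `η(G)`: the supremum of `|E(H)| / √(|V₁|·|V₂|)` over all induced bipartite
subgraphs `H` of `G` with bipartition into nonempty independent sets `V₁`, `V₂`. -/
noncomputable def eta (G : SimpleGraph V) : ℝ :=
  sSup {x : ℝ | ∃ V₁ V₂ : Finset V, V₁.Nonempty ∧ V₂.Nonempty ∧ Disjoint V₁ V₂ ∧
    IsIndepFinset G V₁ ∧ IsIndepFinset G V₂ ∧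
    x = (inducedEdgeCount G (V₁ ∪ V₂) : ℝ) / Real.sqrt ((V₁.card : ℝ) * (V₂.card : ℝ))}

/-- `ι(G)`: the supremum of the average degree `2|E(H)|/|V(H)|` over all nonempty
induced bipartite subgraphs `H` of `G`. -/
noncomputable def iota (G : SimpleGraph V) : ℝ :=
  sSup {x : ℝ | ∃ V₁ V₂ : Finset V, (V₁ ∪ V₂).Nonempty ∧ Disjoint V₁ V₂ ∧
    IsIndepFinset G V₁ ∧ IsIndepFinset G V₂ ∧
    x = 2 * (inducedEdgeCount G (V₁ ∪ V₂) : ℝ) / ((V₁ ∪ V₂).card : ℝ)}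

/-!
Rayleigh quotient with a signed indicator: for an induced bipartite subgraph `H` with sides
`V₁`, `V₂`, the vector `x` equal to `1` on `V₁`, `-1` on `V₂` and `0` elsewhere has
`xᵀx = |V(H)|` and `xᵀAx = -2|E(H)|`, because every edge of `H` joins the two sides. Hence
`λ(G)·|V(H)| ≤ -2|E(H)|`. Because `sSup ∅ = 0`, `Real.sSup_le` also asks for `0 ≤ -λ(G)`;
a single vertex gives it.
-/

open scoped ComplexOrder

namespace Matrix.IsHermitian

variable {𝕜 n : Type*} [RCLike 𝕜] [Fintype n] [DecidableEq n] {A : Matrix n n 𝕜}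

theorem posSemidef_sub_smul_one_of_le_eigenvalues (hA : A.IsHermitian) {c : ℝ}
    (hc : ∀ i, c ≤ hA.eigenvalues i) : (A - (c : 𝕜) • 1).PosSemidef := by
  set U : Matrix n n 𝕜 := (hA.eigenvectorUnitary : Matrix n n 𝕜)
  have hUU : U * star U = 1 := Unitary.mul_star_self_of_mem hA.eigenvectorUnitary.2
  have hshift : diagonal (fun i => ((hA.eigenvalues i - c : ℝ) : 𝕜))
      = diagonal (RCLike.ofReal ∘ hA.eigenvalues) - (c : 𝕜) • 1 := by
    ext i j
    by_cases h : i = j <;> simp [h, Algebra.algebraMap_eq_smul_one, sub_smul]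
  have hconj : A - (c : 𝕜) • 1
      = U * diagonal (fun i => ((hA.eigenvalues i - c : ℝ) : 𝕜)) * Uᴴ := by
    conv_lhs => rw [hA.spectral_theorem, Unitary.conjStarAlgAut_apply]
    rw [hshift, mul_sub, sub_mul, mul_smul_comm, smul_mul_assoc, mul_one,
      ← star_eq_conjTranspose, hUU]
  rw [hconj]
  exact (posSemidef_diagonal_iff.mpr fun i => by simpa using hc i).mul_mul_conjTranspose_same U

theorem iInf_eigenvalues_mul_dotProduct_self_le {A : Matrix n n ℝ} (hA : A.IsHermitian)
    (x : n → ℝ) : (⨅ i, hA.eigenvalues i) * (x ⬝ᵥ x) ≤ x ⬝ᵥ (A *ᵥ x) := by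
  have hmin (i : n) : (⨅ j, hA.eigenvalues j) ≤ hA.eigenvalues i :=
    ciInf_le (Finite.bddBelow_range _) i
  have := (hA.posSemidef_sub_smul_one_of_le_eigenvalues hmin).dotProduct_mulVec_nonneg x
  simpa [sub_mulVec, dotProduct_sub, smul_mulVec, dotProduct_smul] using this

end Matrix.IsHermitian

omit [Fintype V] [DecidableEq V] in
theorem two_mul_inducedEdgeCount (G : SimpleGraph V) [DecidableRel G.Adj] (s : Finset V) :
    2 * inducedEdgeCount G s = ∑ u ∈ s, ∑ v ∈ s, if G.Adj u v then 1 else 0 := by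
  have hE : inducedEdgeCount G s = (G.induce (s : Set V)).edgeFinset.card := by
    rw [inducedEdgeCount, Nat.card_eq_fintype_card, ← Set.toFinset_card]
    simp only [edgeFinset]
  have hdeg (a : (s : Set V)) :
      (G.induce (s : Set V)).degree a = ∑ v ∈ s, if G.Adj a v then 1 else 0 := by
    rw [degree, neighborFinset_eq_filter, Finset.card_filter,
      ← Finset.sum_finset_coe (f := fun v => if G.Adj (a : V) v then 1 else 0)]
    exact Finset.sum_congr rfl fun i _ => by rw [if_congr comap_adj rfl rfl]; rfl
  rw [hE, ← sum_degrees_eq_twice_card_edges, Finset.sum_congr rfl fun a _ => hdeg a,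
    ← Finset.sum_finset_coe (f := fun u => ∑ v ∈ s, if G.Adj u v then 1 else 0)]

def signVector (V₁ V₂ : Finset V) : V → ℝ :=
  fun u => if u ∈ V₁ then 1 else if u ∈ V₂ then -1 else 0

section signVector

variable {V₁ V₂ : Finset V}

theorem signVector_dotProduct_self :
    signVector V₁ V₂ ⬝ᵥ signVector V₁ V₂ = (V₁ ∪ V₂).card := by
  have hsq (u : V) : signVector V₁ V₂ u * signVector V₁ V₂ u = if u ∈ V₁ ∪ V₂ then 1 else 0 := by
    unfold signVector; split_ifs <;> simp_all
  simp only [dotProduct, hsq, Finset.sum_boole, Finset.filter_mem_eq_inter, Finset.univ_inter]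

omit [Fintype V] in
theorem signVector_mul_signVector_of_adj {G : SimpleGraph V} (h₁ : IsIndepFinset G V₁)
    (h₂ : IsIndepFinset G V₂) {u v : V} (huv : G.Adj u v) :
    signVector V₁ V₂ u * signVector V₁ V₂ v = if u ∈ V₁ ∪ V₂ ∧ v ∈ V₁ ∪ V₂ then -1 else 0 := by
  unfold signVector
  have := h₁ u; have := h₁ v; have := h₂ u; have := h₂ v
  split_ifs <;> simp_all

theorem signVector_dotProduct_adjMatrix_mulVec (G : SimpleGraph V) [DecidableRel G.Adj]
    (h₁ : IsIndepFinset G V₁) (h₂ : IsIndepFinset G V₂) :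
    signVector V₁ V₂ ⬝ᵥ G.adjMatrix ℝ *ᵥ signVector V₁ V₂
      = -(2 * inducedEdgeCount G (V₁ ∪ V₂) : ℝ) := by
  set s := V₁ ∪ V₂
  calc signVector V₁ V₂ ⬝ᵥ G.adjMatrix ℝ *ᵥ signVector V₁ V₂
      = ∑ u, ∑ v, -(if u ∈ s then if v ∈ s then if G.Adj u v then 1 else 0 else 0 else 0) := by
        rw [dotProduct_mulVec_adjMatrix]
        refine Finset.sum_congr rfl fun u _ => Finset.sum_congr rfl fun v _ => ?_
        by_cases huv : G.Adj u v
        · rw [if_pos huv, signVector_mul_signVector_of_adj h₁ h₂ huv, ite_and]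
          split_ifs <;> simp
        · simp [huv]
    _ = -(∑ u ∈ s, ∑ v ∈ s, if G.Adj u v then 1 else 0) := by
        simp only [Finset.sum_neg_distrib, Finset.sum_ite_irrel, Finset.sum_const_zero,
          Finset.sum_ite_mem, Finset.univ_inter]
    _ = -(2 * inducedEdgeCount G s : ℝ) := by
        rw [← Nat.cast_ofNat, ← Nat.cast_mul, two_mul_inducedEdgeCount]
        push_cast; rfl

end signVector

theorem avgDegree_le_neg_lambdaMin (G : SimpleGraph V) {V₁ V₂ : Finset V}
    (hne : (V₁ ∪ V₂).Nonempty) (h₁ : IsIndepFinset G V₁) (h₂ : IsIndepFinset G V₂) :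
    2 * (inducedEdgeCount G (V₁ ∪ V₂) : ℝ) / (V₁ ∪ V₂).card ≤ -lambdaMin G := by
  let := Classical.decRel G.Adj
  have hray : lambdaMin G * (V₁ ∪ V₂).card ≤ -(2 * inducedEdgeCount G (V₁ ∪ V₂) : ℝ) := by
    have := (adj_isHermitian G).iInf_eigenvalues_mul_dotProduct_self_le (signVector V₁ V₂)
    rwa [signVector_dotProduct_self, signVector_dotProduct_adjMatrix_mulVec G h₁ h₂] at this
  rw [div_le_iff₀ (by exact_mod_cast hne.card_pos)]
  linarith

theorem lambdaMin_nonpos (G : SimpleGraph V) : lambdaMin G ≤ 0 := by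
  rcases isEmpty_or_nonempty V with _ | ⟨⟨v⟩⟩
  · exact (Real.iInf_of_isEmpty _).le
  · have := avgDegree_le_neg_lambdaMin G (V₁ := {v}) (V₂ := ∅) (by simp)
      (fun a ha b hb => by simp_all) (by simp [IsIndepFinset])
    have : 0 ≤ 2 * (inducedEdgeCount G ({v} ∪ ∅) : ℝ) / ({v} ∪ ∅ : Finset V).card := by
      positivity
    linarith

theorem smallest_eigenvalue_le_neg_iota_general (G : SimpleGraph V) :
    lambdaMin G ≤ -iota G := by
  rw [le_neg]
  refine Real.sSup_le ?_ (neg_nonneg.mpr (lambdaMin_nonpos G))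
  rintro _ ⟨V₁, V₂, hne, -, h₁, h₂, rfl⟩
  exact avgDegree_le_neg_lambdaMin G hne h₁ h₂

/-- Corollary 2.6. Let `G` be a graph with at least two vertices.
Then `λ(G) ≤ -ι(G)`. -/
theorem smallest_eigenvalue_le_neg_iota (G : SimpleGraph V) (hV : 2 ≤ Fintype.card V) :
    lambdaMin G ≤ -iota G :=
  smallest_eigenvalue_le_neg_iota_general G
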